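/- arXiv:1005.5094 — 3 statements merged into one kernel-verified Lean document; each statement's English description precedes it below -/
import Mathlib

section
/- Let h1, h2 : D̄ → D be injective holomorphic maps from the closed unit disc into the open unit disc with disjoint images (h1(D̄) ∩ h2(D̄) = ∅). Then the limit set Λ = ⋂_{n≥1} ⋃_{(i1,...,in)∈{1,2}^n} h_{i1} ∘ ... ∘ h_{in}(D̄) is a nonempty, compact, perfect, totally disconnected subset of D (i.e., a Cantor set). -/
/-!
Write `ρ(a, z) = ‖mobius a z‖ = |z - a| / |1 - ā z|` for the pseudo-hyperbolic distance on the
disc. If a holomorphic self-map `f` of the disc has its image in a set `K` of `ρ`-diameter `s`,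
the Schwarz lemma applied to `f` conjugated by disc automorphisms gives `ρ(f a, f b) ≤ s ρ(a, b)`.
For `K = h₁(D̄) ∪ h₂(D̄)`, a compact subset of `D`, we have `s < 1`, so the cylinder
`h_{i₀} ∘ ⋯ ∘ h_{iₙ}(D̄)` has `ρ`-diameter at most `s ^ (n + 1)` and Euclidean diameter at most
twice that. Cylinders of distinct words of equal length are disjoint, by injectivity and the
disjointness of `h₁(D̄)` and `h₂(D̄)`. Thus a preconnected subset of `Λ` lies in one cylinder of
each length and is a point, while a point `x ∈ Λ` misses one of the two subcylinders of its
cylinder, and the image of `x` under that subcylinder's word is a nearby point of `Λ`.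
-/

open Metric

/-- Composition `h_{i₁} ∘ ... ∘ h_{iₙ}` along a finite word `[i₁,...,iₙ]` in `{1,2}`. -/
def compWord (h : Fin 2 → ℂ → ℂ) : List (Fin 2) → ℂ → ℂ
  | [] => id
  | i :: w => h i ∘ compWord h w

/-- The limit set `Λ = ⋂_{n≥1} ⋃_{(i₁,...,iₙ)∈{1,2}ⁿ} h_{i₁}∘...∘h_{iₙ}(D̄)`. -/
def limitSet (h : Fin 2 → ℂ → ℂ) : Set ℂ :=
  ⋂ (n : ℕ) (_ : 1 ≤ n), ⋃ (w : List (Fin 2)) (_ : w.length = n),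
    compWord h w '' closedBall (0 : ℂ) 1

open Set ComplexConjugate

noncomputable def mobius (a z : ℂ) : ℂ := (z - a) / (1 - conj a * z)

section Mobius

variable {a z : ℂ}

theorem one_sub_conj_mul_ne_zero (ha : ‖a‖ < 1) (hz : ‖z‖ < 1) : 1 - conj a * z ≠ 0 := by
  refine sub_ne_zero.2 fun h => ?_
  have : ‖conj a * z‖ < 1 := by
    rw [norm_mul, Complex.norm_conj]
    exact mul_lt_one_of_nonneg_of_lt_one_left (norm_nonneg a) ha hz.le
  simp [← h] at this

theorem normSq_one_sub_conj_mul_sub_normSq_sub (a z : ℂ) :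
    Complex.normSq (1 - conj a * z) - Complex.normSq (z - a)
      = (1 - Complex.normSq a) * (1 - Complex.normSq z) := by
  simp only [Complex.normSq_apply, Complex.mul_re, Complex.mul_im, Complex.conj_re,
    Complex.conj_im, Complex.sub_re, Complex.sub_im, Complex.one_re, Complex.one_im]
  ring

theorem norm_mobius_lt_one (ha : ‖a‖ < 1) (hz : ‖z‖ < 1) : ‖mobius a z‖ < 1 := by
  have hd := one_sub_conj_mul_ne_zero ha hz
  have hsq : Complex.normSq (z - a) < Complex.normSq (1 - conj a * z) := by
    have : 0 < (1 - Complex.normSq a) * (1 - Complex.normSq z) := by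
      rw [← Complex.sq_norm, ← Complex.sq_norm]
      exact mul_pos (by nlinarith [norm_nonneg a]) (by nlinarith [norm_nonneg z])
    linarith [normSq_one_sub_conj_mul_sub_normSq_sub a z]
  rw [mobius, norm_div, div_lt_one (norm_pos_iff.2 hd)]
  rw [← Complex.sq_norm, ← Complex.sq_norm] at hsq
  exact lt_of_pow_lt_pow_left₀ 2 (norm_nonneg _) hsq

@[simp] theorem mobius_self (a : ℂ) : mobius a a = 0 := by simp [mobius]

@[simp] theorem mobius_neg_zero (a : ℂ) : mobius (-a) 0 = a := by simp [mobius]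

theorem mobius_neg_mobius (ha : ‖a‖ < 1) (hz : ‖z‖ < 1) : mobius (-a) (mobius a z) = z := by
  have hd := one_sub_conj_mul_ne_zero ha hz
  have ha' := one_sub_conj_mul_ne_zero ha ha
  have hden :
      1 + conj a * ((z - a) / (1 - conj a * z)) = (1 - conj a * a) / (1 - conj a * z) := by
    field_simp
    ring
  simp only [mobius, map_neg, neg_mul, sub_neg_eq_add, hden]
  rw [div_add' _ _ _ hd, div_div_div_cancel_right₀ hd, div_eq_iff ha']
  ring

theorem differentiableOn_mobius (ha : ‖a‖ < 1) : DifferentiableOn ℂ (mobius a) (ball 0 1) :=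
  DifferentiableOn.div (by fun_prop) (by fun_prop) fun _ hz =>
    one_sub_conj_mul_ne_zero ha (mem_ball_zero_iff.1 hz)

theorem continuousOn_mobius :
    ContinuousOn (fun p : ℂ × ℂ => mobius p.1 p.2) (ball 0 1 ×ˢ ball 0 1) := by
  refine ContinuousOn.div (by fun_prop) (by fun_prop) fun p hp => ?_
  exact one_sub_conj_mul_ne_zero (mem_ball_zero_iff.1 hp.1) (mem_ball_zero_iff.1 hp.2)

theorem dist_le_two_mul_norm_mobius (ha : ‖a‖ < 1) (hz : ‖z‖ < 1) :
    dist a z ≤ 2 * ‖mobius a z‖ := by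
  have hd := norm_pos_iff.2 (one_sub_conj_mul_ne_zero ha hz)
  have hden : ‖1 - conj a * z‖ ≤ 2 := by
    calc ‖1 - conj a * z‖ ≤ ‖(1 : ℂ)‖ + ‖a‖ * ‖z‖ := by
          simpa [Complex.norm_conj] using norm_sub_le (1 : ℂ) (conj a * z)
      _ ≤ 2 := by nlinarith [norm_nonneg a, norm_nonneg z, norm_one (α := ℂ)]
  rw [mobius, norm_div, dist_comm, dist_eq_norm, mul_div_assoc', le_div_iff₀ hd]
  nlinarith [norm_nonneg (z - a)]

end Mobius

theorem norm_mobius_le_mul_of_mapsTo {f : ℂ → ℂ} {K : Set ℂ} {s : ℝ}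
    (hf : DifferentiableOn ℂ f (ball 0 1)) (hfK : MapsTo f (ball 0 1) K) (hK : K ⊆ ball 0 1)
    (hs : ∀ u ∈ K, ∀ v ∈ K, ‖mobius u v‖ ≤ s) {a b : ℂ} (ha : ‖a‖ < 1)
    (hb : ‖b‖ < 1) : ‖mobius (f a) (f b)‖ ≤ s * ‖mobius a b‖ := by
  have hfa : ‖f a‖ < 1 := mem_ball_zero_iff.1 (hK (hfK (mem_ball_zero_iff.2 ha)))
  have hmob : MapsTo (mobius (-a)) (ball 0 1) (ball 0 1) := fun z hz =>
    mem_ball_zero_iff.2 (norm_mobius_lt_one (by simpa using ha) (mem_ball_zero_iff.1 hz))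
  set g : ℂ → ℂ := fun z => mobius (f a) (f (mobius (-a) z))
  have hg : DifferentiableOn ℂ g (ball 0 1) :=
    (differentiableOn_mobius hfa).comp (hf.comp (differentiableOn_mobius (by simpa using ha)) hmob)
      fun z hz => hK (hfK (hmob hz))
  have hg0 : g 0 = 0 := by simp [g]
  have hgs : MapsTo g (ball 0 1) (closedBall (g 0) s) := fun z hz => by
    rw [hg0, mem_closedBall_zero_iff]
    exact hs _ (hfK (mem_ball_zero_iff.2 ha)) _ (hfK (hmob hz))
  have hab : g (mobius a b) = mobius (f a) (f b) := by simp only [g, mobius_neg_mobius ha hb]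
  simpa [hab, hg0] using Complex.dist_le_div_mul_dist_of_mapsTo_ball hg hgs
    (mem_ball_zero_iff.2 (norm_mobius_lt_one ha hb))

theorem IsCompact.exists_norm_mobius_le {K : Set ℂ} (hK : IsCompact K) (hK1 : K ⊆ ball 0 1) :
    ∃ s, 0 ≤ s ∧ s < 1 ∧ ∀ u ∈ K, ∀ v ∈ K, ‖mobius u v‖ ≤ s := by
  rcases K.eq_empty_or_nonempty with rfl | hne
  · exact ⟨0, le_rfl, one_pos, by simp⟩
  have hcont : ContinuousOn (fun p : ℂ × ℂ => ‖mobius p.1 p.2‖) (K ×ˢ K) :=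
    continuousOn_mobius.norm.mono (prod_mono hK1 hK1)
  obtain ⟨p, hp, hmax⟩ := (hK.prod hK).exists_isMaxOn (hne.prod hne) hcont
  exact ⟨_, norm_nonneg _, norm_mobius_lt_one (mem_ball_zero_iff.1 (hK1 hp.1))
    (mem_ball_zero_iff.1 (hK1 hp.2)), fun u hu v hv => hmax (mk_mem_prod hu hv)⟩

section CompWord

variable {h : Fin 2 → ℂ → ℂ} {X : Set ℂ}

theorem compWord_append (v w : List (Fin 2)) :
    compWord h (v ++ w) = compWord h v ∘ compWord h w := by
  induction v with
  | nil => rfl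
  | cons i v ih => simp only [List.cons_append, compWord, ih, Function.comp_assoc]

theorem mapsTo_compWord (hX : ∀ i, MapsTo (h i) X X) (w : List (Fin 2)) :
    MapsTo (compWord h w) X X := by
  induction w with
  | nil => exact mapsTo_id X
  | cons i w ih => exact (hX i).comp ih

theorem continuousOn_compWord (hc : ∀ i, ContinuousOn (h i) X) (hX : ∀ i, MapsTo (h i) X X)
    (w : List (Fin 2)) : ContinuousOn (compWord h w) X := by
  induction w with
  | nil => exact continuousOn_id
  | cons i w ih => exact (hc i).comp ih (mapsTo_compWord hX w)

theorem disjoint_image_compWord (hinj : ∀ i, InjOn (h i) X) (hX : ∀ i, MapsTo (h i) X X)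
    (hdisj : Disjoint (h 0 '' X) (h 1 '' X)) {v w : List (Fin 2)} (hlen : v.length = w.length)
    (hne : v ≠ w) : Disjoint (compWord h v '' X) (compWord h w '' X) := by
  induction v generalizing w with
  | nil => cases w <;> simp_all
  | cons i v ih =>
    obtain _ | ⟨j, w⟩ := w
    · simp at hlen
    simp only [compWord, image_comp]
    rcases eq_or_ne i j with rfl | hij
    · have hvw := ih (by simpa using hlen) (by simpa using hne)
      rw [disjoint_iff_inter_eq_empty, ← (hinj i).image_inter (mapsTo_compWord hX v).image_subset
        (mapsTo_compWord hX w).image_subset, hvw.inter_eq, image_empty]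
    · have hdisj' : Disjoint (h i '' X) (h j '' X) := by
        fin_cases i <;> fin_cases j <;> simp_all [disjoint_comm]
      exact hdisj'.mono (image_mono (mapsTo_compWord hX v).image_subset)
        (image_mono (mapsTo_compWord hX w).image_subset)

end CompWord

def cylinder (h : Fin 2 → ℂ → ℂ) (w : List (Fin 2)) : Set ℂ :=
  compWord h w '' closedBall 0 1

def CylindersShrink (h : Fin 2 → ℂ → ℂ) : Prop :=
  ∀ ε > 0, ∃ n, ∀ w : List (Fin 2), w.length = n →
    ∀ x ∈ cylinder h w, ∀ y ∈ cylinder h w, dist x y < ε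

section LimitSet

variable {h : Fin 2 → ℂ → ℂ}

theorem cylinder_append (v w : List (Fin 2)) :
    cylinder h (v ++ w) = compWord h v '' cylinder h w := by
  rw [cylinder, compWord_append, image_comp, cylinder]

theorem cylinder_append_subset (hX : ∀ i, MapsTo (h i) (closedBall 0 1) (closedBall 0 1))
    (v w : List (Fin 2)) : cylinder h (v ++ w) ⊆ cylinder h v := by
  rw [cylinder_append]
  exact image_mono (mapsTo_compWord hX w).image_subset

theorem cylinder_subset_take (hX : ∀ i, MapsTo (h i) (closedBall 0 1) (closedBall 0 1))
    (w : List (Fin 2)) (n : ℕ) : cylinder h w ⊆ cylinder h (w.take n) := by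
  conv_lhs => rw [← List.take_append_drop n w]
  exact cylinder_append_subset hX _ _

theorem isCompact_cylinder (hc : ∀ i, ContinuousOn (h i) (closedBall 0 1))
    (hX : ∀ i, MapsTo (h i) (closedBall 0 1) (closedBall 0 1)) (w : List (Fin 2)) :
    IsCompact (cylinder h w) :=
  (isCompact_closedBall 0 1).image_of_continuousOn (continuousOn_compWord hc hX w)

theorem isClosed_biUnion_cylinder (hc : ∀ i, ContinuousOn (h i) (closedBall 0 1))
    (hX : ∀ i, MapsTo (h i) (closedBall 0 1) (closedBall 0 1)) {W : Set (List (Fin 2))}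
    (hW : W.Finite) : IsClosed (⋃ w ∈ W, cylinder h w) :=
  (hW.isCompact_biUnion fun w _ => isCompact_cylinder hc hX w).isClosed

theorem mem_limitSet_iff (hX : ∀ i, MapsTo (h i) (closedBall 0 1) (closedBall 0 1)) {x : ℂ} :
    x ∈ limitSet h ↔ ∀ n, ∃ w : List (Fin 2), w.length = n ∧ x ∈ cylinder h w := by
  refine ⟨fun hx n => ?_, fun hx => mem_iInter₂.2 fun n _ => ?_⟩
  · obtain ⟨w, hw, hxw⟩ := mem_iUnion₂.1 (mem_iInter₂.1 hx (n + 1) n.succ_pos)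
    exact ⟨w.take n, by simp [hw], cylinder_subset_take hX w n hxw⟩
  · obtain ⟨w, hw, hxw⟩ := hx n
    exact mem_iUnion₂.2 ⟨w, hw, hxw⟩

theorem limitSet_subset_ball (hmaps : ∀ i, MapsTo (h i) (closedBall 0 1) (ball 0 1)) :
    limitSet h ⊆ ball 0 1 := fun x hx => by
  obtain ⟨w, hw, y, hy, rfl⟩ := mem_iUnion₂.1 (mem_iInter₂.1 hx 1 le_rfl)
  obtain ⟨i, rfl⟩ := List.length_eq_one_iff.1 hw
  exact hmaps i hy

theorem limitSet_subset_closedBall (hX : ∀ i, MapsTo (h i) (closedBall 0 1) (closedBall 0 1)) :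
    limitSet h ⊆ closedBall 0 1 := fun x hx => by
  obtain ⟨w, hw, hxw⟩ := (mem_limitSet_iff hX).1 hx 0
  simpa [List.length_eq_zero_iff.1 hw, cylinder, compWord] using hxw

theorem isCompact_limitSet (hc : ∀ i, ContinuousOn (h i) (closedBall 0 1))
    (hX : ∀ i, MapsTo (h i) (closedBall 0 1) (closedBall 0 1)) : IsCompact (limitSet h) := by
  refine (isCompact_closedBall 0 1).of_isClosed_subset ?_ (limitSet_subset_closedBall hX)
  exact isClosed_biInter fun n _ =>
    isClosed_biUnion_cylinder hc hX (List.finite_length_eq (Fin 2) n)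

theorem limitSet_nonempty (hc : ∀ i, ContinuousOn (h i) (closedBall 0 1))
    (hX : ∀ i, MapsTo (h i) (closedBall 0 1) (closedBall 0 1)) : (limitSet h).Nonempty := by
  obtain ⟨x, hx⟩ := IsCompact.nonempty_iInter_of_sequence_nonempty_isCompact_isClosed
    (fun m => cylinder h (List.replicate m 0))
    (fun m => by
      simpa [List.replicate_succ'] using cylinder_append_subset hX (List.replicate m 0) [0])
    (fun m => ⟨_, mem_image_of_mem _ (mem_closedBall_self zero_le_one)⟩)
    (isCompact_cylinder hc hX _) (fun m => (isCompact_cylinder hc hX _).isClosed)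
  exact ⟨x, (mem_limitSet_iff hX).2 fun n => ⟨_, List.length_replicate, mem_iInter.1 hx n⟩⟩

theorem mapsTo_compWord_limitSet (hX : ∀ i, MapsTo (h i) (closedBall 0 1) (closedBall 0 1))
    (v : List (Fin 2)) : MapsTo (compWord h v) (limitSet h) (limitSet h) := fun x hx => by
  refine (mem_limitSet_iff hX).2 fun n => ?_
  obtain ⟨w, hw, hxw⟩ := (mem_limitSet_iff hX).1 hx n
  refine ⟨(v ++ w).take n, by simp [hw], cylinder_subset_take hX _ n ?_⟩
  rw [cylinder_append]
  exact mem_image_of_mem _ hxw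

end LimitSet

section Shrink

variable {h : Fin 2 → ℂ → ℂ}

theorem norm_mobius_compWord_cons_le {K : Set ℂ} {s : ℝ}
    (hhol : ∀ i, DifferentiableOn ℂ (h i) (ball 0 1))
    (hhK : ∀ i, MapsTo (h i) (closedBall 0 1) K) (hK : K ⊆ ball 0 1) (hs0 : 0 ≤ s)
    (hs : ∀ u ∈ K, ∀ v ∈ K, ‖mobius u v‖ ≤ s) (i : Fin 2) (w : List (Fin 2))
    {x y : ℂ} (hx : x ∈ closedBall 0 1) (hy : y ∈ closedBall 0 1) :
    ‖mobius (compWord h (i :: w) x) (compWord h (i :: w) y)‖ ≤ s ^ (w.length + 1) := by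
  have hX i : MapsTo (h i) (closedBall 0 1) (closedBall 0 1) := fun z hz =>
    ball_subset_closedBall (hK (hhK i hz))
  have hmem j v {z : ℂ} (hz : z ∈ closedBall 0 1) : ‖compWord h (j :: v) z‖ < 1 :=
    mem_ball_zero_iff.1 (hK (hhK j (mapsTo_compWord hX v hz)))
  induction w generalizing i with
  | nil => simpa [compWord] using hs _ (hhK i hx) _ (hhK i hy)
  | cons j w ih =>
    calc ‖mobius (h i (compWord h (j :: w) x)) (h i (compWord h (j :: w) y))‖
        ≤ s * ‖mobius (compWord h (j :: w) x) (compWord h (j :: w) y)‖ :=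
          norm_mobius_le_mul_of_mapsTo (hhol i) ((hhK i).mono_left ball_subset_closedBall) hK hs
            (hmem j w hx) (hmem j w hy)
      _ ≤ s * s ^ (w.length + 1) := mul_le_mul_of_nonneg_left (ih j) hs0
      _ = s ^ ((j :: w).length + 1) := by simp [pow_succ']

theorem cylindersShrink (hc : ∀ i, ContinuousOn (h i) (closedBall 0 1))
    (hhol : ∀ i, DifferentiableOn ℂ (h i) (ball 0 1))
    (hmaps : ∀ i, MapsTo (h i) (closedBall 0 1) (ball 0 1)) : CylindersShrink h := by
  set K := ⋃ i, h i '' closedBall 0 1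
  have hhK i : MapsTo (h i) (closedBall 0 1) K := fun z hz =>
    mem_iUnion.2 ⟨i, mem_image_of_mem _ hz⟩
  have hK : K ⊆ ball 0 1 := iUnion_subset fun i => (hmaps i).image_subset
  obtain ⟨s, hs0, hs1, hs⟩ := IsCompact.exists_norm_mobius_le
    (isCompact_iUnion fun i => (isCompact_closedBall 0 1).image_of_continuousOn (hc i)) hK
  intro ε hε
  obtain ⟨m, hm⟩ := exists_pow_lt_of_lt_one (half_pos hε) hs1
  refine ⟨m + 1, fun w hw => ?_⟩
  obtain ⟨i, v, rfl⟩ := List.exists_cons_of_length_eq_add_one hw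
  have hv : v.length = m := by simpa using hw
  have hX j : MapsTo (h j) (closedBall 0 1) (closedBall 0 1) :=
    (hmaps j).mono_right ball_subset_closedBall
  have hmem {z : ℂ} (hz : z ∈ closedBall 0 1) : ‖compWord h (i :: v) z‖ < 1 :=
    mem_ball_zero_iff.1 (hmaps i (mapsTo_compWord hX v hz))
  rintro _ ⟨x, hx, rfl⟩ _ ⟨y, hy, rfl⟩
  calc dist (compWord h (i :: v) x) (compWord h (i :: v) y)
      ≤ 2 * ‖mobius (compWord h (i :: v) x) (compWord h (i :: v) y)‖ :=
        dist_le_two_mul_norm_mobius (hmem hx) (hmem hy)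
    _ ≤ 2 * s ^ (m + 1) := by
        rw [← hv]; gcongr; exact norm_mobius_compWord_cons_le hhol hhK hK hs0 hs i v hx hy
    _ ≤ 2 * s ^ m := by gcongr ?_ * ?_; exact pow_le_pow_of_le_one hs0 hs1.le m.le_succ
    _ < ε := by linarith

end Shrink

section Cantor

variable {h : Fin 2 → ℂ → ℂ}

theorem disjoint_cylinder (hinj : ∀ i, InjOn (h i) (closedBall 0 1))
    (hX : ∀ i, MapsTo (h i) (closedBall 0 1) (closedBall 0 1))
    (hdisj : Disjoint (h 0 '' closedBall 0 1) (h 1 '' closedBall 0 1)) {v w : List (Fin 2)}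
    (hlen : v.length = w.length) (hne : v ≠ w) : Disjoint (cylinder h v) (cylinder h w) :=
  disjoint_image_compWord hinj hX hdisj hlen hne

theorem perfect_limitSet (hc : ∀ i, ContinuousOn (h i) (closedBall 0 1))
    (hinj : ∀ i, InjOn (h i) (closedBall 0 1))
    (hX : ∀ i, MapsTo (h i) (closedBall 0 1) (closedBall 0 1))
    (hdisj : Disjoint (h 0 '' closedBall 0 1) (h 1 '' closedBall 0 1))
    (hshrink : CylindersShrink h) : Perfect (limitSet h) := by
  refine ⟨(isCompact_limitSet hc hX).isClosed, fun x hx => accPt_iff_nhds.2 fun U hU => ?_⟩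
  obtain ⟨ε, hε, hεU⟩ := Metric.mem_nhds_iff.1 hU
  obtain ⟨n, hn⟩ := hshrink ε hε
  obtain ⟨w, hw, hxw⟩ := (mem_limitSet_iff hX).1 hx n
  obtain ⟨c, hxc⟩ : ∃ c, x ∉ cylinder h (w ++ [c]) := by
    by_contra! hmem
    exact (disjoint_cylinder hinj hX hdisj (by simp) (by simp)).ne_of_mem (hmem 0) (hmem 1) rfl
  have hyc : compWord h (w ++ [c]) x ∈ cylinder h (w ++ [c]) :=
    mem_image_of_mem _ (limitSet_subset_closedBall hX hx)
  refine ⟨_, ⟨hεU ?_, mapsTo_compWord_limitSet hX _ hx⟩, fun hyx => hxc (hyx ▸ hyc)⟩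
  exact mem_ball.2 (hn w hw _ (cylinder_append_subset hX w [c] hyc) x hxw)

theorem IsPreconnected.subset_cylinder (hc : ∀ i, ContinuousOn (h i) (closedBall 0 1))
    (hinj : ∀ i, InjOn (h i) (closedBall 0 1))
    (hX : ∀ i, MapsTo (h i) (closedBall 0 1) (closedBall 0 1))
    (hdisj : Disjoint (h 0 '' closedBall 0 1) (h 1 '' closedBall 0 1)) {t : Set ℂ}
    (ht : IsPreconnected t) (htΛ : t ⊆ limitSet h) {w : List (Fin 2)} {x : ℂ} (hxt : x ∈ t)
    (hxw : x ∈ cylinder h w) : t ⊆ cylinder h w := by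
  set W := {v : List (Fin 2) | v.length = w.length ∧ v ≠ w}
  have hWfin : W.Finite := (List.finite_length_eq (Fin 2) w.length).subset fun _ hv => hv.1
  have hWdisj : Disjoint (cylinder h w) (⋃ v ∈ W, cylinder h v) :=
    disjoint_iUnion₂_right.2 fun v hv => disjoint_cylinder hinj hX hdisj hv.1.symm (Ne.symm hv.2)
  have hcover : t ⊆ cylinder h w ∪ ⋃ v ∈ W, cylinder h v := fun z hz => by
    obtain ⟨v, hv, hzv⟩ := (mem_limitSet_iff hX).1 (htΛ hz) w.length
    rcases eq_or_ne v w with rfl | hne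
    · exact Or.inl hzv
    · exact Or.inr (mem_biUnion ⟨hv, hne⟩ hzv)
  refine (isPreconnected_iff_subset_of_disjoint_closed.1 ht _ _
    (isCompact_cylinder hc hX w).isClosed (isClosed_biUnion_cylinder hc hX hWfin) hcover
    (by rw [hWdisj.inter_eq, inter_empty])).resolve_right fun htW => ?_
  exact hWdisj.ne_of_mem hxw (htW hxt) rfl

theorem isTotallyDisconnected_limitSet (hc : ∀ i, ContinuousOn (h i) (closedBall 0 1))
    (hinj : ∀ i, InjOn (h i) (closedBall 0 1))
    (hX : ∀ i, MapsTo (h i) (closedBall 0 1) (closedBall 0 1))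
    (hdisj : Disjoint (h 0 '' closedBall 0 1) (h 1 '' closedBall 0 1))
    (hshrink : CylindersShrink h) : IsTotallyDisconnected (limitSet h) := by
  intro t htΛ ht x hxt y hyt
  by_contra hxy
  obtain ⟨n, hn⟩ := hshrink (dist x y) (dist_pos.2 hxy)
  obtain ⟨w, hw, hxw⟩ := (mem_limitSet_iff hX).1 (htΛ hxt) n
  have htw := ht.subset_cylinder hc hinj hX hdisj htΛ hxt hxw
  exact (hn w hw x hxw y (htw hyt)).false

end Cantor

/-- If `h₁, h₂ : D̄ → D` are injective holomorphic maps from the closed unit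
disc into the open unit disc with disjoint images, then the limit set
`Λ = ⋂_{n≥1} ⋃_{words of length n} h_{i₁}∘...∘h_{iₙ}(D̄)` is a nonempty compact perfect
totally disconnected subset of `D` (a Cantor set). -/
theorem limit_set_is_cantor_set
    (h : Fin 2 → ℂ → ℂ)
    (hcont : ∀ i, ContinuousOn (h i) (closedBall (0 : ℂ) 1))
    (hhol : ∀ i, DifferentiableOn ℂ (h i) (ball (0 : ℂ) 1))
    (hinj : ∀ i, Set.InjOn (h i) (closedBall (0 : ℂ) 1))
    (hmaps : ∀ i, Set.MapsTo (h i) (closedBall (0 : ℂ) 1) (ball (0 : ℂ) 1))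
    (hdisj : (h 0 '' closedBall (0 : ℂ) 1) ∩ (h 1 '' closedBall (0 : ℂ) 1) = ∅) :
    (limitSet h).Nonempty ∧ IsCompact (limitSet h) ∧ Perfect (limitSet h)
      ∧ IsTotallyDisconnected (limitSet h) ∧ limitSet h ⊆ ball (0 : ℂ) 1 := by
  have hX i : MapsTo (h i) (closedBall 0 1) (closedBall 0 1) :=
    (hmaps i).mono_right ball_subset_closedBall
  have hdisj' := disjoint_iff_inter_eq_empty.2 hdisj
  have hshrink := cylindersShrink hcont hhol hmaps
  exact ⟨limitSet_nonempty hcont hX, isCompact_limitSet hcont hX,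
    perfect_limitSet hcont hinj hX hdisj' hshrink,
    isTotallyDisconnected_limitSet hcont hinj hX hdisj' hshrink, limitSet_subset_ball hmaps⟩
end

section
/- (Zassenhaus-type non-discreteness) There is a neighborhood U of the identity in PSL(2,ℂ) such that any subgroup of PSL(2,ℂ) generated by elements of U is either discrete-and-nilpotent or non-discrete; consequently, a non-abelian (more precisely, non-nilpotent) subgroup generated by elements sufficiently close to the identity is non-discrete. -/
open Filter Topology

/-- `SL(2,ℂ)`, topologized as a subspace of the matrices. -/
abbrev SL2C := Matrix.SpecialLinearGroup (Fin 2) ℂ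

noncomputable instance : TopologicalSpace SL2C :=
  TopologicalSpace.induced (fun g => (g : Matrix (Fin 2) (Fin 2) ℂ)) inferInstance

/-- `PSL(2,ℂ) = SL(2,ℂ)/center`, with the quotient topology. -/
abbrev PSL2C := SL2C ⧸ Subgroup.center SL2C

/-!
Measure the distance of `A ∈ SL(2,ℂ)` from the identity by the Frobenius norm of `A - 1`.
The identity `⁅A, B⁆ - 1 = ((A - 1)(B - 1) - (B - 1)(A - 1)) A⁻¹ B⁻¹` gives
`‖⁅A, B⁆ - 1‖ ≤ 8 ‖A - 1‖ ‖B - 1‖` near the identity, so on the ball of radius `1/16` taking a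
commutator at least halves the distance to `1`. If `A` and `B` do not commute, `C = ⁅A, B⁆` is
neither `1` nor, being close to `1`, `-1`; so it is not scalar, and since the centralizer of a
non-scalar `2 × 2` matrix is commutative, `C` fails to commute with `A` or with `B`. Iterating
gives non-central elements of the lifted group arbitrarily close to `1`, contradicting
discreteness in `PSL(2,ℂ)`. So a discrete subgroup generated near the identity is abelian, hence
nilpotent.
-/

open scoped Matrix commutatorElement MatrixGroups Matrix.Norms.Frobenius

theorem cross_eq_zero_of_cross_eq_zero {K : Type*} [Field K] {d u w : Fin 3 → K} (hd : d ≠ 0)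
    (hu : d ⨯₃ u = 0) (hw : d ⨯₃ w = 0) : u ⨯₃ w = 0 := by
  have parallel {v : Fin 3 → K} (hv : d ⨯₃ v = 0) : ∃ a : K, a • d = v := by
    simpa [LinearIndependent.pair_iff' hd] using
      mt crossProduct_ne_zero_iff_linearIndependent.mpr (not_not.mpr hv)
  obtain ⟨a, rfl⟩ := parallel hu
  obtain ⟨b, rfl⟩ := parallel hw
  simp [cross_self]

theorem norm_mul_mul_mul_sub_one_le {R : Type*} [NormedRing R] {a b a' b' : R}
    (ha : a * a' = 1) (hb : b * b' = 1) :
    ‖a * b * a' * b' - 1‖ ≤ 2 * ‖a - 1‖ * ‖b - 1‖ * (‖a'‖ * ‖b'‖) := by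
  have hba : b * a * (a' * b') = 1 := by rw [mul_assoc, ← mul_assoc a, ha, one_mul, hb]
  have key : a * b * a' * b' - 1 = ((a - 1) * (b - 1) - (b - 1) * (a - 1)) * (a' * b') := by
    have : (a - 1) * (b - 1) - (b - 1) * (a - 1) = a * b - b * a := by noncomm_ring
    rw [this, sub_mul, hba]
    simp only [mul_assoc]
  calc ‖a * b * a' * b' - 1‖
      ≤ ‖(a - 1) * (b - 1) - (b - 1) * (a - 1)‖ * ‖a' * b'‖ := key ▸ norm_mul_le _ _
    _ ≤ (‖a - 1‖ * ‖b - 1‖ + ‖b - 1‖ * ‖a - 1‖) * (‖a'‖ * ‖b'‖) := by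
        gcongr
        · exact (norm_sub_le _ _).trans (add_le_add (norm_mul_le _ _) (norm_mul_le _ _))
        · exact norm_mul_le _ _
    _ = 2 * ‖a - 1‖ * ‖b - 1‖ * (‖a'‖ * ‖b'‖) := by ring

namespace Matrix

variable {K : Type*} [Field K]

-- Coordinates modulo scalars in which the commutator of `2 × 2` matrices is the cross product.
def sl2Coords (M : Matrix (Fin 2) (Fin 2) K) : Fin 3 → K := ![M 0 1, M 1 0, M 0 0 - M 1 1]

theorem mul_sub_mul_eq_cross (D X : Matrix (Fin 2) (Fin 2) K) :
    let w := sl2Coords D ⨯₃ sl2Coords X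
    D * X - X * D = !![w 2, w 1; w 0, -w 2] := by
  ext i j
  fin_cases i <;> fin_cases j <;> simp [sl2Coords, cross_apply, mul_apply, Fin.sum_univ_two] <;> ring

theorem commute_iff_sl2Coords_cross_eq_zero {D X : Matrix (Fin 2) (Fin 2) K} :
    Commute D X ↔ sl2Coords D ⨯₃ sl2Coords X = 0 := by
  rw [commute_iff_eq, ← sub_eq_zero, mul_sub_mul_eq_cross]
  simp only [← ext_iff, of_apply, cons_val', cons_val_fin_one, zero_apply, Fin.forall_fin_succ,
    cons_val_zero, cons_val_succ, neg_eq_zero, funext_iff, Pi.zero_apply, Fin.succ_zero_eq_one,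
    Fin.succ_one_eq_two, IsEmpty.forall_iff, and_true]
  tauto

theorem commute_of_commute_of_notMem_range_scalar {D X Y : Matrix (Fin 2) (Fin 2) K}
    (hD : D ∉ Set.range (scalar (Fin 2))) (hX : Commute D X) (hY : Commute D Y) :
    Commute X Y := by
  rw [commute_iff_sl2Coords_cross_eq_zero] at hX hY ⊢
  refine cross_eq_zero_of_cross_eq_zero (fun h => hD ⟨D 0 0, ?_⟩) hX hY
  simp only [sl2Coords, Matrix.cons_eq_zero_iff, sub_eq_zero] at h
  ext i j
  fin_cases i <;> fin_cases j <;> simp [h]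

end Matrix

namespace Matrix.SpecialLinearGroup

section CommRing

variable {R : Type*} [CommRing R]

theorem commute_iff_coe {A B : SL(2, R)} :
    Commute A B ↔ Commute (A : Matrix (Fin 2) (Fin 2) R) B := by
  rw [commute_iff_eq, commute_iff_eq, ← coe_mul, ← coe_mul]
  exact Subtype.val_injective.eq_iff.symm

theorem coe_notMem_range_scalar {C : SL(2, R)} (hC : C ∉ Subgroup.center SL(2, R)) :
    (C : Matrix (Fin 2) (Fin 2) R) ∉ Set.range (scalar (Fin 2)) := by
  rintro ⟨r, hr⟩
  refine hC (mem_center_iff.mpr ⟨r, ?_, hr⟩)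
  simpa [← hr] using C.det_coe

end CommRing

theorem frobenius_norm_coe_inv {R : Type*} [NormedCommRing R] (A : SL(2, R)) :
    ‖((A⁻¹ : SL(2, R)) : Matrix (Fin 2) (Fin 2) R)‖ = ‖(A : Matrix (Fin 2) (Fin 2) R)‖ := by
  rw [coe_inv, adjugate_fin_two, frobenius_norm_def, frobenius_norm_def]
  simp only [Fin.sum_univ_two, of_apply, cons_val_zero, cons_val_one, norm_neg]
  ring_nf

variable {𝕜 : Type*} [RCLike 𝕜]

theorem frobenius_norm_one_fin_two : ‖(1 : Matrix (Fin 2) (Fin 2) 𝕜)‖ = √2 := by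
  simpa using congrArg NNReal.toReal (frobenius_nnnorm_one (n := Fin 2) (α := 𝕜))

theorem norm_commutator_sub_one_le {A B : SL(2, 𝕜)}
    (hA : ‖(A : Matrix (Fin 2) (Fin 2) 𝕜) - 1‖ ≤ 1 / 2)
    (hB : ‖(B : Matrix (Fin 2) (Fin 2) 𝕜) - 1‖ ≤ 1 / 2) :
    ‖((⁅A, B⁆ : SL(2, 𝕜)) : Matrix (Fin 2) (Fin 2) 𝕜) - 1‖ ≤
      8 * ‖(A : Matrix (Fin 2) (Fin 2) 𝕜) - 1‖ * ‖(B : Matrix (Fin 2) (Fin 2) 𝕜) - 1‖ := by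
  have coe_mul_inv (C : SL(2, 𝕜)) :
      (C : Matrix (Fin 2) (Fin 2) 𝕜) * ((C⁻¹ : SL(2, 𝕜)) : Matrix (Fin 2) (Fin 2) 𝕜) = 1 := by
    rw [← coe_mul, mul_inv_cancel, coe_one]
  have norm_inv_le (C : SL(2, 𝕜)) (hC : ‖(C : Matrix (Fin 2) (Fin 2) 𝕜) - 1‖ ≤ 1 / 2) :
      ‖((C⁻¹ : SL(2, 𝕜)) : Matrix (Fin 2) (Fin 2) 𝕜)‖ ≤ 2 := by
    have : √2 ≤ 3 / 2 := Real.sqrt_le_iff.mpr ⟨by norm_num, by norm_num⟩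
    rw [frobenius_norm_coe_inv]
    linarith [norm_le_norm_add_norm_sub' (C : Matrix (Fin 2) (Fin 2) 𝕜) 1,
      frobenius_norm_one_fin_two (𝕜 := 𝕜)]
  rw [commutatorElement_def, coe_mul, coe_mul, coe_mul]
  refine (norm_mul_mul_mul_sub_one_le (coe_mul_inv A) (coe_mul_inv B)).trans ?_
  have := mul_le_mul (norm_inv_le A hA) (norm_inv_le B hB) (norm_nonneg _) zero_le_two
  have := mul_nonneg (norm_nonneg ((A : Matrix (Fin 2) (Fin 2) 𝕜) - 1))
    (norm_nonneg ((B : Matrix (Fin 2) (Fin 2) 𝕜) - 1))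
  nlinarith

theorem eq_one_of_mem_center_of_norm_sub_one_lt {C : SL(2, 𝕜)}
    (hC : C ∈ Subgroup.center SL(2, 𝕜)) (h : ‖(C : Matrix (Fin 2) (Fin 2) 𝕜) - 1‖ < 2) :
    C = 1 := by
  obtain ⟨r, hr, hrC⟩ := mem_center_iff.mp hC
  rcases sq_eq_one_iff.mp hr with rfl | rfl
  · exact Subtype.ext (by simpa using hrC.symm)
  · have : (C : Matrix (Fin 2) (Fin 2) 𝕜) - 1 = -(2 : 𝕜) • 1 := by
      rw [← hrC]; ext i j; fin_cases i <;> fin_cases j <;> simp <;> norm_num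
    rw [this, norm_smul, frobenius_norm_one_fin_two] at h
    have : (1 : ℝ) ≤ √2 := Real.one_le_sqrt.mpr one_le_two
    norm_num at h
    linarith

theorem not_commute_commutator {A B : SL(2, 𝕜)} (hAB : ¬Commute A B)
    (hA : ‖(A : Matrix (Fin 2) (Fin 2) 𝕜) - 1‖ ≤ 1 / 16)
    (hB : ‖(B : Matrix (Fin 2) (Fin 2) 𝕜) - 1‖ ≤ 1 / 16) :
    ¬Commute ⁅A, B⁆ A ∨ ¬Commute ⁅A, B⁆ B := by
  have noncentral : ⁅A, B⁆ ∉ Subgroup.center SL(2, 𝕜) := by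
    refine fun hC => hAB (commutatorElement_eq_one_iff_commute.mp
      (eq_one_of_mem_center_of_norm_sub_one_lt hC ?_))
    have := norm_commutator_sub_one_le (hA.trans (by norm_num)) (hB.trans (by norm_num))
    nlinarith [norm_nonneg ((A : Matrix (Fin 2) (Fin 2) 𝕜) - 1)]
  by_contra! h
  rw [commute_iff_coe, commute_iff_coe] at h
  exact hAB (commute_iff_coe.mpr
    (commute_of_commute_of_notMem_range_scalar (coe_notMem_range_scalar noncentral) h.1 h.2))

theorem exists_not_commute_norm_sub_one_le (H : Subgroup SL(2, 𝕜)) {A B : SL(2, 𝕜)}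
    (hA : A ∈ H) (hB : B ∈ H) (hAB : ¬Commute A B)
    (hA1 : ‖(A : Matrix (Fin 2) (Fin 2) 𝕜) - 1‖ ≤ 1 / 16)
    (hB1 : ‖(B : Matrix (Fin 2) (Fin 2) 𝕜) - 1‖ ≤ 1 / 16) (n : ℕ) :
    ∃ A' ∈ H, ∃ B' ∈ H, ¬Commute A' B' ∧
      ‖(A' : Matrix (Fin 2) (Fin 2) 𝕜) - 1‖ ≤ (1 / 2) ^ n / 16 ∧
      ‖(B' : Matrix (Fin 2) (Fin 2) 𝕜) - 1‖ ≤ 1 / 16 := by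
  induction n with
  | zero => exact ⟨A, hA, B, hB, hAB, by simpa using hA1, hB1⟩
  | succ n ih =>
    obtain ⟨A, hA, B, hB, hAB, hA1, hB1⟩ := ih
    have hA1' : ‖(A : Matrix (Fin 2) (Fin 2) 𝕜) - 1‖ ≤ 1 / 16 :=
      hA1.trans (by gcongr; exact pow_le_one₀ (by norm_num) (by norm_num))
    have hC : ⁅A, B⁆ ∈ H := by
      rw [commutatorElement_def]
      exact mul_mem (mul_mem (mul_mem hA hB) (inv_mem hA)) (inv_mem hB)
    have hC1 :
        ‖((⁅A, B⁆ : SL(2, 𝕜)) : Matrix (Fin 2) (Fin 2) 𝕜) - 1‖ ≤ (1 / 2) ^ (n + 1) / 16 := by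
      have := norm_commutator_sub_one_le (hA1'.trans (by norm_num)) (hB1.trans (by norm_num))
      rw [pow_succ]
      nlinarith [norm_nonneg ((A : Matrix (Fin 2) (Fin 2) 𝕜) - 1)]
    rcases not_commute_commutator hAB hA1' hB1 with h | h
    · exact ⟨_, hC, A, hA, h, hC1, hA1'⟩
    · exact ⟨_, hC, B, hB, h, hC1, hB1⟩

theorem exists_notMem_center_norm_sub_one_lt (H : Subgroup SL(2, 𝕜)) {A B : SL(2, 𝕜)}
    (hA : A ∈ H) (hB : B ∈ H) (hAB : ¬Commute A B)
    (hA1 : ‖(A : Matrix (Fin 2) (Fin 2) 𝕜) - 1‖ ≤ 1 / 16)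
    (hB1 : ‖(B : Matrix (Fin 2) (Fin 2) 𝕜) - 1‖ ≤ 1 / 16) {ε : ℝ} (hε : 0 < ε) :
    ∃ C ∈ H, C ∉ Subgroup.center SL(2, 𝕜) ∧ ‖(C : Matrix (Fin 2) (Fin 2) 𝕜) - 1‖ < ε := by
  obtain ⟨n, hn⟩ :=
    exists_pow_lt_of_lt_one (by positivity : 0 < 16 * ε) (by norm_num : (1 / 2 : ℝ) < 1)
  obtain ⟨C, hC, D, -, hCD, hC1, -⟩ := exists_not_commute_norm_sub_one_le H hA hB hAB hA1 hB1 n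
  exact ⟨C, hC, fun hcen => hCD (Subgroup.mem_center_iff.mp hcen D).symm, by linarith⟩

end Matrix.SpecialLinearGroup

-- The topology on `SL2C` is Mathlib's subspace topology, but instance search does not see it.
instance : IsTopologicalGroup SL2C := Matrix.SpecialLinearGroup.topologicalGroup

theorem nhds_one_basis_norm_sub_one_lt :
    (𝓝 (1 : SL2C)).HasBasis (fun ε : ℝ => 0 < ε)
      fun ε => {A | ‖(A : Matrix (Fin 2) (Fin 2) ℂ) - 1‖ < ε} := by
  rw [nhds_induced, Matrix.SpecialLinearGroup.coe_one]
  convert (Metric.nhds_basis_ball (x := (1 : Matrix (Fin 2) (Fin 2) ℂ))).comap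
    (fun A : SL2C => (A : Matrix (Fin 2) (Fin 2) ℂ)) using 2 with ε
  -- The Frobenius norm induces the product topology on matrices definitionally.
  · rfl
  · ext A
    simp [dist_eq_norm]

theorem exists_forall_mem_center_of_discreteTopology (Γ : Subgroup PSL2C) [DiscreteTopology Γ] :
    ∃ ε > 0, ∀ C : SL2C, (C : PSL2C) ∈ Γ → ‖(C : Matrix (Fin 2) (Fin 2) ℂ) - 1‖ < ε →
      C ∈ Subgroup.center SL2C := by
  obtain ⟨O, hO, hOΓ⟩ := nhds_inter_eq_singleton_of_mem_discrete
    (SetLike.isDiscrete_iff_discreteTopology.mpr ‹_›) Γ.one_mem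
  obtain ⟨ε, hε, hεO⟩ := nhds_one_basis_norm_sub_one_lt.mem_iff.mp
    (continuous_quot_mk.continuousAt.preimage_mem_nhds hO)
  refine ⟨ε, hε, fun C hCΓ hC1 => (QuotientGroup.eq_one_iff C).mp ?_⟩
  rw [← Set.mem_singleton_iff, ← hOΓ]
  exact ⟨hεO hC1, hCΓ⟩

theorem commute_of_discreteTopology {S : Set PSL2C}
    (hS : S ⊆ QuotientGroup.mk '' {A : SL2C | ‖(A : Matrix (Fin 2) (Fin 2) ℂ) - 1‖ ≤ 1 / 16})
    [DiscreteTopology (Subgroup.closure S)] {a b : PSL2C} (ha : a ∈ S) (hb : b ∈ S) :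
    Commute a b := by
  obtain ⟨A, hA1, rfl⟩ := hS ha
  obtain ⟨B, hB1, rfl⟩ := hS hb
  by_contra hab
  have hAB : ¬Commute A B := fun h => hab (h.map (QuotientGroup.mk' _))
  obtain ⟨ε, hε, hcenter⟩ := exists_forall_mem_center_of_discreteTopology (Subgroup.closure S)
  obtain ⟨C, hC, hCcenter, hC1⟩ := Matrix.SpecialLinearGroup.exists_notMem_center_norm_sub_one_lt
    ((Subgroup.closure S).comap (QuotientGroup.mk' _)) (Subgroup.subset_closure ha)
    (Subgroup.subset_closure hb) hAB hA1 hB1 hε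
  exact hCcenter (hcenter C hC hC1)

/-- Zassenhaus: There is a neighborhood `U` of the identity in `PSL(2,ℂ)`
such that every subgroup generated by elements of `U` which is discrete is nilpotent;
consequently, a subgroup generated by elements of `U` which is not nilpotent is not
discrete. -/
theorem zassenhaus_psl2c :
    ∃ U : Set PSL2C, U ∈ 𝓝 (1 : PSL2C) ∧
      (∀ S : Set PSL2C, S ⊆ U →
        (DiscreteTopology ↥(Subgroup.closure S) → Group.IsNilpotent ↥(Subgroup.closure S)) ∧
        (¬ Group.IsNilpotent ↥(Subgroup.closure S) →
          ¬ DiscreteTopology ↥(Subgroup.closure S))) := by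
  refine ⟨QuotientGroup.mk '' {A : SL2C | ‖(A : Matrix (Fin 2) (Fin 2) ℂ) - 1‖ ≤ 1 / 16}, ?_,
    fun S hS => ?_⟩
  · rw [← QuotientGroup.mk_one, QuotientGroup.nhds_eq]
    exact image_mem_map (nhds_one_basis_norm_sub_one_lt.mem_of_superset
      (by norm_num : (0 : ℝ) < 1 / 16) (Set.ofPred_subset_ofPred.mpr fun _ => le_of_lt))
  have nilpotent (hΓ : DiscreteTopology (Subgroup.closure S)) :
      Group.IsNilpotent (Subgroup.closure S) := by
    have := Subgroup.isMulCommutative_closure fun a ha b hb => commute_of_discreteTopology hS ha hb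
    open scoped IsMulCommutative in infer_instance
  exact ⟨nilpotent, mt nilpotent⟩
end

section
/- Let f(z) = λz on the unit disc 𝔻 with 0 < |λ| < 1, and let g be an injective holomorphic map on 𝔻 close to the identity. Define the commutator sequence g_0 = g, g_{k+1} = f^{−N} ∘ (f ∘ g_k ∘ f^{−1} ∘ g_k^{−1}) ∘ f^N. There exist ε0 > 0 and, given |λ − 1| ≤ ε0 and sup_{𝔻}|g(z) − z| ≤ ε0, an integer N ≥ 1 such that each g_k is defined at least on 𝔻_{1/3} and g_k → id uniformly on 𝔻_{1/3} as k → ∞. -/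
/-!
Write `a = λ^N` with `1/25 < |a| < 1/24`. If `‖h - id‖ ≤ δ` on `𝔻_{2/3}`, then for
`y = h⁻¹(a z)` and `v = λ⁻¹ y` the next map `z ↦ a⁻¹ λ h(v)` satisfies
`a⁻¹ λ h(v) - z = a⁻¹ ((λ - 1)(h v - v) + (h v - v) - (h y - y))`.
The Cauchy estimates make `h - id` Lipschitz with constant `5δ` on `𝔻_{2/5}`, and
`|v - y| ≤ 2|λ - 1| |y|`, so the distance to the identity drops from `δ` to `δ/2`: it tends to zero
geometrically. The inverse `h⁻¹` exists near `0` by the maximum principle for `1 / (h - c)`, and is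
holomorphic by the inverse function theorem since `|h' - 1| ≤ 5δ`.
-/

open Metric Filter Function Topology

section CauchyEstimates

variable {E : Type*} [NormedAddCommGroup E] [NormedSpace ℂ E] {ε : ℂ → E} {c x y : ℂ} {R r δ : ℝ}

theorem norm_deriv_le_of_forall_mem_closedBall_norm_le
    (hε : DifferentiableOn ℂ ε (closedBall c R)) (hb : ∀ z ∈ closedBall c R, ‖ε z‖ ≤ δ)
    (hr : r < R) (hx : x ∈ closedBall c r) : ‖deriv ε x‖ ≤ δ / (R - r) := by
  have hsub : closedBall x (R - r) ⊆ closedBall c R :=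
    closedBall_subset_closedBall' (by linarith [mem_closedBall.1 hx])
  exact Complex.norm_deriv_le_of_forall_mem_sphere_norm_le (sub_pos.2 hr)
    (hε.diffContOnCl_ball hsub) fun z hz => hb z (hsub (sphere_subset_closedBall hz))

theorem norm_sub_le_of_forall_mem_closedBall_norm_le
    (hε : DifferentiableOn ℂ ε (closedBall c R)) (hb : ∀ z ∈ closedBall c R, ‖ε z‖ ≤ δ)
    (hr : r < R) (hx : x ∈ closedBall c r) (hy : y ∈ closedBall c r) :
    ‖ε x - ε y‖ ≤ δ / (R - r) * ‖x - y‖ :=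
  (convex_closedBall c r).norm_image_sub_le_of_norm_deriv_le
    (fun _ hz => (hε.mono ball_subset_closedBall).differentiableAt
      (isOpen_ball.mem_nhds (closedBall_subset_ball hr hz)))
    (fun _ hz => norm_deriv_le_of_forall_mem_closedBall_norm_le hε hb hr hz) hy hx

end CauchyEstimates

theorem mul_norm_sub_le_norm_sub_of_norm_sub_sub_le {E : Type*} [SeminormedAddCommGroup E]
    {h : E → E} {x y : E} {L : ℝ} (hxy : ‖(h x - x) - (h y - y)‖ ≤ L * ‖x - y‖) :
    (1 - L) * ‖x - y‖ ≤ ‖h x - h y‖ := by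
  have : ‖x - y‖ ≤ ‖h x - h y‖ + ‖(h x - x) - (h y - y)‖ :=
    calc ‖x - y‖ = ‖(h x - h y) - ((h x - x) - (h y - y))‖ := by congr 1; abel
      _ ≤ _ := norm_sub_le _ _
  linarith

theorem exists_eq_of_forall_mem_closedBall_norm_sub_le {h : ℂ → ℂ} {c : ℂ} {r δ : ℝ}
    (hh : DifferentiableOn ℂ h (closedBall c r)) (hb : ∀ z ∈ closedBall c r, ‖h z - z‖ ≤ δ)
    (hδ : 0 ≤ δ) (hr : 2 * δ < r) : ∃ w ∈ closedBall c r, h w = c := by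
  by_contra! hne
  have hr0 : 0 < r := by linarith
  have hc : c ∈ closedBall c r := mem_closedBall_self hr0.le
  have hcen : 0 < ‖h c - c‖ := norm_pos_iff.2 (sub_ne_zero.2 (hne c hc))
  have hsphere : ∀ w ∈ sphere c r, ‖(h w - c)⁻¹‖ ≤ (r - δ)⁻¹ := by
    intro w hw
    have hw' : ‖w - c‖ = r := mem_sphere_iff_norm.1 hw
    have : r - δ ≤ ‖h w - c‖ := by
      have := hb w (sphere_subset_closedBall hw)
      have := norm_sub_norm_le (w - c) (w - h w)
      rw [norm_sub_rev w (h w)] at this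
      calc r - δ ≤ ‖w - c‖ - ‖h w - w‖ := by linarith
        _ ≤ ‖(w - c) - (w - h w)‖ := by linarith
        _ = ‖h w - c‖ := by congr 1; abel
    rw [norm_inv]
    exact inv_anti₀ (by linarith) this
  have hmax : ‖(h c - c)⁻¹‖ ≤ (r - δ)⁻¹ := by
    refine Complex.norm_le_of_forall_mem_frontier_norm_le isBounded_ball
      (((hh.sub_const c).inv fun w hw => sub_ne_zero.2 (hne w hw)).diffContOnCl_ball subset_rfl)
      (fun w hw => hsphere w (frontier_ball_subset_sphere hw)) (subset_closure (mem_ball_self hr0))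
  rw [norm_inv] at hmax
  have := inv_anti₀ hcen (hb c hc)
  have := inv_strictAnti₀ (hcen.trans_le (hb c hc)) (show δ < r - δ by linarith)
  linarith

theorem norm_inv_le_of_norm_sub_one_le {𝕜 : Type*} [NormedField 𝕜] {lam : 𝕜} {t : ℝ} (ht : t < 1)
    (hlam : ‖lam - 1‖ ≤ t) : ‖lam⁻¹‖ ≤ (1 - t)⁻¹ := by
  have : 1 - t ≤ ‖lam‖ := by
    have := norm_le_norm_add_norm_sub' (1 : 𝕜) lam
    rw [norm_one, norm_sub_rev] at this
    linarith
  rw [norm_inv]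
  exact inv_anti₀ (by linarith) this

theorem norm_inv_sub_one_le_of_norm_sub_one_le {𝕜 : Type*} [NormedField 𝕜] {lam : 𝕜} {t : ℝ}
    (ht : t < 1) (hlam : ‖lam - 1‖ ≤ t) : ‖lam⁻¹ - 1‖ ≤ (1 - t)⁻¹ * t := by
  have hlam0 : lam ≠ 0 := by
    rintro rfl
    rw [zero_sub, norm_neg, norm_one] at hlam
    linarith
  rw [show lam⁻¹ - 1 = lam⁻¹ * (1 - lam) by field_simp, norm_mul, norm_sub_rev]
  exact mul_le_mul (norm_inv_le_of_norm_sub_one_le ht hlam) hlam (norm_nonneg _)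
    (by rw [inv_nonneg]; linarith)

structure IsNearIdentityOn (h : ℂ → ℂ) (s : Set ℂ) (δ : ℝ) : Prop where
  differentiableOn : DifferentiableOn ℂ h s
  norm_sub_le : ∀ z ∈ s, ‖h z - z‖ ≤ δ

/-- `f^{-N} ∘ [f, h] ∘ f^N` for `f = lam • id` and `a = lam ^ N`, with `h⁻¹` read as the inverse of
`h` on `closedBall 0 (2/5)`, where near-identity maps are injective. -/
noncomputable def commutatorStep (lam a : ℂ) (h : ℂ → ℂ) (z : ℂ) : ℂ :=
  a⁻¹ * (lam * h (lam⁻¹ * invFunOn h (closedBall 0 (2/5)) (a * z)))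

namespace IsNearIdentityOn

variable {h : ℂ → ℂ} {s : Set ℂ} {δ : ℝ} {lam a u x y z : ℂ}

theorem nonneg (hh : IsNearIdentityOn h s δ) (hs : s.Nonempty) : 0 ≤ δ :=
  let ⟨z, hz⟩ := hs
  (norm_nonneg _).trans (hh.norm_sub_le z hz)

theorem mono {t : Set ℂ} {δ' : ℝ} (hh : IsNearIdentityOn h s δ) (hts : t ⊆ s) (hδ : δ ≤ δ') :
    IsNearIdentityOn h t δ' :=
  ⟨hh.differentiableOn.mono hts, fun z hz => (hh.norm_sub_le z (hts hz)).trans hδ⟩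

theorem sub_id_closedBall (hh : IsNearIdentityOn h (ball 0 (2/3)) δ) :
    DifferentiableOn ℂ (fun z => h z - z) (closedBall 0 (3/5)) ∧
      ∀ z ∈ closedBall (0 : ℂ) (3/5), ‖h z - z‖ ≤ δ :=
  have hsub : closedBall (0 : ℂ) (3/5) ⊆ ball 0 (2/3) := closedBall_subset_ball (by norm_num)
  ⟨(hh.differentiableOn.sub differentiableOn_id).mono hsub, fun z hz => hh.norm_sub_le z (hsub hz)⟩

theorem norm_sub_sub_le (hh : IsNearIdentityOn h (ball 0 (2/3)) δ)
    (hx : x ∈ closedBall 0 (2/5)) (hy : y ∈ closedBall 0 (2/5)) :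
    ‖(h x - x) - (h y - y)‖ ≤ 5 * δ * ‖x - y‖ := by
  have := norm_sub_le_of_forall_mem_closedBall_norm_le hh.sub_id_closedBall.1
    hh.sub_id_closedBall.2 (by norm_num : (2/5 : ℝ) < 3/5) hx hy
  convert this using 2
  ring

theorem norm_deriv_sub_one_le (hh : IsNearIdentityOn h (ball 0 (2/3)) δ)
    (hx : x ∈ closedBall 0 (2/5)) : ‖deriv h x - 1‖ ≤ 5 * δ := by
  have := norm_deriv_le_of_forall_mem_closedBall_norm_le hh.sub_id_closedBall.1
    hh.sub_id_closedBall.2 (by norm_num : (2/5 : ℝ) < 3/5) hx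
  have hd : DifferentiableAt ℂ h x := hh.differentiableOn.differentiableAt
    (isOpen_ball.mem_nhds (closedBall_subset_ball (by norm_num) hx))
  rw [deriv_fun_sub hd differentiableAt_fun_id, deriv_id''] at this
  convert this using 1
  ring

theorem injOn (hh : IsNearIdentityOn h (ball 0 (2/3)) δ) (hδ : δ < 1/5) :
    Set.InjOn h (closedBall 0 (2/5)) := by
  intro x hx y hy hxy
  have := mul_norm_sub_le_norm_sub_of_norm_sub_sub_le (hh.norm_sub_sub_le hx hy)
  rw [hxy, sub_self, norm_zero] at this
  have : ‖x - y‖ = 0 := by nlinarith [norm_nonneg (x - y)]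
  exact sub_eq_zero.1 (norm_eq_zero.1 this)

theorem invFunOn_pos (hh : IsNearIdentityOn h (ball 0 (2/3)) δ) (hδ : δ ≤ 1/10000)
    (hu : ‖u‖ ≤ 1/20) :
    invFunOn h (closedBall 0 (2/5)) u ∈ closedBall 0 (2/5) ∧
      h (invFunOn h (closedBall 0 (2/5)) u) = u := by
  have hsub : closedBall u (1/100) ⊆ closedBall 0 (2/5) :=
    closedBall_subset_closedBall' (by rw [dist_zero_right]; linarith)
  have hsub' : closedBall u (1/100) ⊆ ball 0 (2/3) :=
    hsub.trans (closedBall_subset_ball (by norm_num))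
  obtain ⟨w, hw, hwu⟩ := exists_eq_of_forall_mem_closedBall_norm_sub_le
    (hh.differentiableOn.mono hsub') (fun z hz => hh.norm_sub_le z (hsub' hz))
    (hh.nonneg ⟨0, mem_ball_self (by norm_num)⟩) (by linarith)
  exact Function.invFunOn_pos ⟨w, hsub hw, hwu⟩

theorem norm_invFunOn_sub_le (hh : IsNearIdentityOn h (ball 0 (2/3)) δ) (hδ : δ ≤ 1/10000)
    (hu : ‖u‖ ≤ 1/20) : ‖invFunOn h (closedBall 0 (2/5)) u - u‖ ≤ δ := by
  obtain ⟨hmem, heq⟩ := hh.invFunOn_pos hδ hu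
  have := hh.norm_sub_le _ (closedBall_subset_ball (by norm_num) hmem)
  rwa [heq, norm_sub_rev] at this

theorem differentiableAt_invFunOn (hh : IsNearIdentityOn h (ball 0 (2/3)) δ) (hδ : δ ≤ 1/10000)
    (hu : ‖u‖ < 1/20) : DifferentiableAt ℂ (invFunOn h (closedBall 0 (2/5))) u := by
  set W := invFunOn h (closedBall (0 : ℂ) (2/5))
  have hU : ball (0 : ℂ) (1/20) ∈ 𝓝 u := isOpen_ball.mem_nhds (mem_ball_zero_iff.2 hu)
  have hcont : ContinuousOn W (ball 0 (1/20)) := by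
    refine (LipschitzOnWith.of_dist_le' (K := (1 - 5 * δ)⁻¹) fun x hx y hy => ?_).continuousOn
    obtain ⟨hxm, hxe⟩ := hh.invFunOn_pos hδ (mem_ball_zero_iff.1 hx).le
    obtain ⟨hym, hye⟩ := hh.invFunOn_pos hδ (mem_ball_zero_iff.1 hy).le
    have := mul_norm_sub_le_norm_sub_of_norm_sub_sub_le (hh.norm_sub_sub_le hxm hym)
    rw [hxe, hye] at this
    rw [dist_eq_norm, dist_eq_norm, inv_mul_eq_div, le_div_iff₀ (by linarith)]
    linarith
  obtain ⟨hmem, -⟩ := hh.invFunOn_pos hδ hu.le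
  have hd : HasDerivAt h (deriv h (W u)) (W u) := (hh.differentiableOn.differentiableAt
    (isOpen_ball.mem_nhds (closedBall_subset_ball (by norm_num) hmem))).hasDerivAt
  have hne : deriv h (W u) ≠ 0 := by
    intro h0
    have := hh.norm_deriv_sub_one_le hmem
    rw [h0, zero_sub, norm_neg, norm_one] at this
    linarith
  exact (hd.of_local_left_inverse (hcont.continuousAt hU) hne (eventually_of_mem hU
    fun v hv => (hh.invFunOn_pos hδ (mem_ball_zero_iff.1 hv).le).2)).differentiableAt

theorem norm_invFunOn_mul_lt (hh : IsNearIdentityOn h (ball 0 (2/3)) δ) (hδ : δ ≤ 1/10000)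
    (hlam : ‖lam - 1‖ ≤ 1/10000) (ha : ‖a‖ ≤ 1/24) (hz : z ∈ ball 0 (2/3)) :
    ‖a * z‖ < 1/20 ∧ ‖invFunOn h (closedBall 0 (2/5)) (a * z)‖ < 1/30 ∧
      ‖lam⁻¹ * invFunOn h (closedBall 0 (2/5)) (a * z)‖ < 1/29 := by
  have hu : ‖a * z‖ ≤ 1/24 * (2/3) := by
    rw [norm_mul]
    exact mul_le_mul ha (mem_ball_zero_iff.1 hz).le (norm_nonneg _) (by norm_num)
  have hW := hh.norm_invFunOn_sub_le hδ (hu.trans (by norm_num))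
  have hWn := norm_le_norm_add_norm_sub' (invFunOn h (closedBall 0 (2/5)) (a * z)) (a * z)
  have hWn' : ‖invFunOn h (closedBall 0 (2/5)) (a * z)‖ < 1/30 := by linarith
  refine ⟨by linarith, hWn', ?_⟩
  rw [norm_mul]
  calc _ ≤ (1 - 1/10000)⁻¹ * (1/30) := mul_le_mul
          (norm_inv_le_of_norm_sub_one_le (by norm_num) hlam) hWn'.le (norm_nonneg _) (by norm_num)
    _ < 1/29 := by norm_num

theorem differentiableOn_commutatorStep (hh : IsNearIdentityOn h (ball 0 (2/3)) δ)
    (hδ : δ ≤ 1/10000) (hlam : ‖lam - 1‖ ≤ 1/10000) (ha : ‖a‖ ≤ 1/24) :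
    DifferentiableOn ℂ (commutatorStep lam a h) (ball 0 (2/3)) := by
  intro z hz
  obtain ⟨hu, -, hv⟩ := hh.norm_invFunOn_mul_lt hδ hlam ha hz
  have hW := (hh.differentiableAt_invFunOn hδ hu).comp z (differentiableAt_id.const_mul a)
  have hh' := hh.differentiableOn.differentiableAt
    (isOpen_ball.mem_nhds (mem_ball_zero_iff.2 (hv.trans (by norm_num))))
  exact ((hh'.comp z (hW.const_mul _)).const_mul lam).const_mul _ |>.differentiableWithinAt

theorem norm_commutatorStep_sub_le (hh : IsNearIdentityOn h (ball 0 (2/3)) δ)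
    (hδ : δ ≤ 1/10000) (hlam : ‖lam - 1‖ ≤ 1/10000) (ha : 1/25 < ‖a‖) (ha' : ‖a‖ ≤ 1/24)
    (hz : z ∈ ball 0 (2/3)) : ‖commutatorStep lam a h z - z‖ ≤ δ / 2 := by
  obtain ⟨hu, hyn, -⟩ := hh.norm_invFunOn_mul_lt hδ hlam ha' hz
  set y := invFunOn h (closedBall 0 (2/5)) (a * z)
  set v := lam⁻¹ * y
  have hy : h y = a * z := (hh.invFunOn_pos hδ hu.le).2
  have hlam0 : lam ≠ 0 := by
    rintro rfl
    norm_num at hlam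
  have ha0 : a ≠ 0 := norm_pos_iff.1 ((by norm_num : (0 : ℝ) < 1/25).trans ha)
  have hvy : ‖v - y‖ ≤ 1/5000 * (1/30) := by
    rw [show v - y = (lam⁻¹ - 1) * y by ring, norm_mul]
    exact mul_le_mul ((norm_inv_sub_one_le_of_norm_sub_one_le (by norm_num) hlam).trans
      (by norm_num)) hyn.le (norm_nonneg _) (by norm_num)
  have hv : v ∈ closedBall 0 (2/5) := by
    rw [mem_closedBall_zero_iff]
    linarith [norm_le_norm_add_norm_sub' v y]
  have hy' : y ∈ closedBall 0 (2/5) := by rw [mem_closedBall_zero_iff]; linarith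
  have hid : commutatorStep lam a h z - z =
      a⁻¹ * ((lam - 1) * (h v - v) + ((h v - v) - (h y - y))) := by
    have hlv : lam * v = y := mul_inv_cancel_left₀ hlam0 y
    show a⁻¹ * (lam * h v) - z = _
    linear_combination a⁻¹ * hlv + a⁻¹ * hy + z * inv_mul_cancel₀ ha0
  have h1 : ‖(lam - 1) * (h v - v)‖ ≤ 1/10000 * δ := by
    rw [norm_mul]
    exact mul_le_mul hlam (hh.norm_sub_le v (closedBall_subset_ball (by norm_num) hv))
      (norm_nonneg _) (by norm_num)
  have h2 : ‖(h v - v) - (h y - y)‖ ≤ 5 * δ * (1/5000 * (1/30)) :=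
    (hh.norm_sub_sub_le hv hy').trans (mul_le_mul_of_nonneg_left hvy
      (by linarith [hh.nonneg ⟨0, mem_ball_self (by norm_num)⟩]))
  have ha_inv : ‖a‖⁻¹ ≤ 25 := by
    rw [inv_le_comm₀ (by linarith) (by norm_num)]
    linarith
  rw [hid, norm_mul, norm_inv]
  calc ‖a‖⁻¹ * ‖(lam - 1) * (h v - v) + ((h v - v) - (h y - y))‖
      ≤ 25 * (1/10000 * δ + 5 * δ * (1/5000 * (1/30))) :=
        mul_le_mul ha_inv ((norm_add_le _ _).trans (add_le_add h1 h2)) (norm_nonneg _) (by norm_num)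
    _ ≤ δ / 2 := by linarith [hh.nonneg ⟨0, mem_ball_self (by norm_num)⟩]

theorem commutatorStep (hh : IsNearIdentityOn h (ball 0 (2/3)) δ) (hδ : δ ≤ 1/10000)
    (hlam : ‖lam - 1‖ ≤ 1/10000) (ha : 1/25 < ‖a‖) (ha' : ‖a‖ ≤ 1/24) :
    IsNearIdentityOn (commutatorStep lam a h) (ball 0 (2/3)) (δ / 2) :=
  ⟨hh.differentiableOn_commutatorStep hδ hlam ha',
    fun _ hz => hh.norm_commutatorStep_sub_le hδ hlam ha ha' hz⟩

theorem iterate_commutatorStep (hh : IsNearIdentityOn h (ball 0 (2/3)) δ) (hδ : δ ≤ 1/10000)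
    (hlam : ‖lam - 1‖ ≤ 1/10000) (ha : 1/25 < ‖a‖) (ha' : ‖a‖ ≤ 1/24) (k : ℕ) :
    IsNearIdentityOn ((_root_.commutatorStep lam a)^[k] h) (ball 0 (2/3)) (δ / 2 ^ k) := by
  induction k with
  | zero => simpa using hh
  | succ k ih =>
    rw [iterate_succ_apply', pow_succ, ← div_div]
    have hδ0 : 0 ≤ δ := hh.nonneg ⟨0, mem_ball_self (by norm_num)⟩
    exact ih.commutatorStep ((div_le_self hδ0 (one_le_pow₀ (by norm_num))).trans hδ) hlam ha ha'

theorem exists_eq_commutatorStep (hh : IsNearIdentityOn h (ball 0 (2/3)) δ) (hδ : δ ≤ 1/10000)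
    (hlam : ‖lam - 1‖ ≤ 1/10000) (ha : ‖a‖ ≤ 1/24) (hz : z ∈ ball 0 (1/3)) :
    ∃ w ∈ ball (0 : ℂ) (1/3), lam⁻¹ * w ∈ ball (0 : ℂ) (1/3) ∧ h w = a * z ∧
      _root_.commutatorStep lam a h z = a⁻¹ * (lam * h (lam⁻¹ * w)) := by
  obtain ⟨hu, hw, hlw⟩ := hh.norm_invFunOn_mul_lt hδ hlam ha (ball_subset_ball (by norm_num) hz)
  exact ⟨_, mem_ball_zero_iff.2 (hw.trans (by norm_num)),
    mem_ball_zero_iff.2 (hlw.trans (by norm_num)), (hh.invFunOn_pos hδ hu.le).2, rfl⟩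

end IsNearIdentityOn

theorem tendstoUniformlyOn_id_of_norm_sub_le {ι E : Type*} [SeminormedAddCommGroup E]
    {l : Filter ι} {F : ι → E → E} {s : Set E} {δ : ι → ℝ} (hF : ∀ i, ∀ z ∈ s, ‖F i z - z‖ ≤ δ i)
    (hδ : Tendsto δ l (𝓝 0)) : TendstoUniformlyOn F id l s := by
  rw [Metric.tendstoUniformlyOn_iff]
  intro ε hε
  filter_upwards [hδ.eventually (gt_mem_nhds hε)] with i hi z hz
  rw [dist_comm, dist_eq_norm]
  exact (hF i z hz).trans_lt hi

/-- Loray–Rebelo Lemma 3.3: There is a universal `ε₀ > 0` such that for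
`f(z) = λz` with `0 < |λ| < 1`, `|λ−1| ≤ ε₀`, and any injective holomorphic `g : 𝔻 → ℂ`
with `sup|g−id| ≤ ε₀`, there is an integer `N ≥ 1` such that the sequence `g₀ = g`,
`g_{k+1} = f^{−N} ∘ (f∘g_k∘f^{−1}∘g_k^{−1}) ∘ f^N` is defined at least on `𝔻_{1/3}`
(each `g_k` holomorphic and injective on a domain containing `𝔻_{1/3}`, the recurrence
being witnessed by the point `w = g_k^{−1}(λ^N z)`), and `g_k → id` uniformly on
`𝔻_{1/3}`. -/
theorem loray_rebelo_commutators :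
    ∃ ε0 : ℝ, 0 < ε0 ∧
      ∀ lam : ℂ, 0 < ‖lam‖ → ‖lam‖ < 1 → ‖lam - 1‖ ≤ ε0 →
      ∀ g : ℂ → ℂ, DifferentiableOn ℂ g (ball (0 : ℂ) 1) →
        Set.InjOn g (ball (0 : ℂ) 1) →
        (∀ z ∈ ball (0 : ℂ) 1, ‖g z - z‖ ≤ ε0) →
        ∃ N : ℕ, 1 ≤ N ∧
          ∃ (G : ℕ → ℂ → ℂ) (Ω : ℕ → Set ℂ),
            (∀ k, IsOpen (Ω k) ∧ ball (0 : ℂ) (1/3) ⊆ Ω k ∧ Ω k ⊆ ball (0 : ℂ) 1) ∧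
            (∀ k, DifferentiableOn ℂ (G k) (Ω k) ∧ Set.InjOn (G k) (Ω k)) ∧
            (Ω 0 = ball (0 : ℂ) 1 ∧ Set.EqOn (G 0) g (ball (0 : ℂ) 1)) ∧
            (∀ k, ∀ z ∈ ball (0 : ℂ) (1/3),
              ∃ w ∈ Ω k, lam⁻¹ * w ∈ Ω k ∧
                G k w = lam ^ N * z ∧
                G (k + 1) z = (lam ^ N)⁻¹ * (lam * G k (lam⁻¹ * w))) ∧
            TendstoUniformlyOn (fun k => G k) id atTop (ball (0 : ℂ) (1/3)) := by
  refine ⟨1/10000, by norm_num, fun lam hlam0 hlam1 hlam g hg hginj hgb => ?_⟩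
  -- `N = n + 1` is chosen so that `1/25 < ‖lam ^ N‖ < 1/24`
  obtain ⟨n, hlt, hle⟩ :=
    exists_nat_pow_near_of_lt_one (by norm_num : (0 : ℝ) < 1/24) (by norm_num) hlam0 hlam1
  have ha : 1/25 < ‖lam ^ (n + 1)‖ := by
    have := norm_le_norm_add_norm_sub' (1 : ℂ) lam
    rw [norm_one, norm_sub_rev] at this
    rw [norm_pow, pow_succ]
    nlinarith
  have ha' : ‖lam ^ (n + 1)‖ ≤ 1/24 := by rw [norm_pow]; exact hlt.le
  have hG := ((IsNearIdentityOn.mk hg hgb).mono (ball_subset_ball (by norm_num)) le_rfl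
    |>.iterate_commutatorStep le_rfl hlam ha ha')
  have hδ (k : ℕ) : (1/10000 : ℝ) / 2 ^ k ≤ 1/10000 :=
    div_le_self (by norm_num) (one_le_pow₀ (by norm_num))
  set Ω : ℕ → Set ℂ := fun | 0 => ball 0 1 | _ + 1 => ball 0 (1/3)
  have hΩ (k : ℕ) : IsOpen (Ω k) ∧ ball (0 : ℂ) (1/3) ⊆ Ω k ∧ Ω k ⊆ ball (0 : ℂ) 1 := by
    cases k <;> exact ⟨isOpen_ball, ball_subset_ball (by norm_num), ball_subset_ball (by norm_num)⟩
  refine ⟨n + 1, by omega, _, Ω, hΩ, ?_, ⟨rfl, fun _ _ => rfl⟩, fun k z hz => ?_,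
    tendstoUniformlyOn_id_of_norm_sub_le
      (fun k z hz => (hG k).norm_sub_le z (ball_subset_ball (by norm_num) hz))
      (tendsto_const_nhds.div_atTop (tendsto_pow_atTop_atTop_of_one_lt one_lt_two))⟩
  · rintro (_ | k)
    · exact ⟨hg, hginj⟩
    · exact ⟨(hG (k + 1)).differentiableOn.mono (ball_subset_ball (by norm_num)),
        ((hG (k + 1)).injOn ((hδ _).trans_lt (by norm_num))).mono
          (ball_subset_closedBall.trans (closedBall_subset_closedBall (by norm_num)))⟩
  · obtain ⟨w, hw, hlw, hhw, heq⟩ := (hG k).exists_eq_commutatorStep (hδ k) hlam ha' hz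
    exact ⟨w, (hΩ k).2.1 hw, (hΩ k).2.1 hlw, hhw, by rw [iterate_succ_apply']; exact heq⟩
end
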